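/- Let N ≥ 3. On the periodic N-qubit chain define H^{(2)}_{ImHop} := (i/2) Σ_{j=1}^N (|110⟩⟨011| − |011⟩⟨110|)_{j,j+1,j+2}. Then H^{(2)}_{ImHop}|W²⟩ = 0, and for a contiguous segment Λ = {ℓ,…,r} (no wrap-around) the truncation H^{(2)}_{ImHop,Λ} := (i/2) Σ_{j=ℓ}^{r−2} (|110⟩⟨011| − |011⟩⟨110|)_{j,j+1,j+2} satisfies H^{(2)}_{ImHop,Λ}|W²⟩ = (i/2)(n_ℓ n_{ℓ+1} − n_{r−1} n_r)|W²⟩. -/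

import Mathlib

open scoped BigOperators

noncomputable section

/-- Configurations of `N` qubits. -/
abbrev Cfg (N : ℕ) := Fin N → Fin 2

/-- The `N`-qubit Hilbert space `⊗_{j=1}^N ℂ²`, identified with `ℂ^(Fin N → Fin 2)`. -/
abbrev QS (N : ℕ) := EuclideanSpace ℂ (Cfg N)

/-- Computational basis state `|t⟩`. -/
def ket {N : ℕ} (t : Cfg N) : QS N := EuclideanSpace.single t 1

/-- Configuration with a single `1` at site `j`. -/
def eConf {N : ℕ} (j : Fin N) : Cfg N := fun k => if k = j then 1 else 0

/-- The all-zero product state `|0̄⟩`. -/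
def zeroKet (N : ℕ) : QS N := ket (fun _ => 0)

/-- The W state `|W⟩ = (1/√N) ∑_j |e_j⟩`. -/
def Wst (N : ℕ) : QS N := (Real.sqrt N : ℂ)⁻¹ • ∑ j : Fin N, ket (eConf j)

/-- Hard-core boson creation operator `s_j† = |1⟩⟨0|` acting at site `j`. -/
def aDag {N : ℕ} (j : Fin N) : QS N →ₗ[ℂ] QS N where
  toFun ψ := WithLp.toLp 2 (fun s => if s j = 1 then ψ (Function.update s j 0) else 0)
  map_add' ψ φ := by ext s; by_cases h : s j = 1 <;> simp [h]
  map_smul' c ψ := by ext s; by_cases h : s j = 1 <;> simp [h]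

/-- Hard-core boson annihilation operator `s_j = |0⟩⟨1|` acting at site `j`. -/
def aOp {N : ℕ} (j : Fin N) : QS N →ₗ[ℂ] QS N where
  toFun ψ := WithLp.toLp 2 (fun s => if s j = 0 then ψ (Function.update s j 1) else 0)
  map_add' ψ φ := by ext s; by_cases h : s j = 0 <;> simp [h]
  map_smul' c ψ := by ext s; by_cases h : s j = 0 <;> simp [h]

/-- Number operator `n_j = s_j† s_j = |1⟩⟨1|_j`. -/
def nOp {N : ℕ} (j : Fin N) : QS N →ₗ[ℂ] QS N := aDag j ∘ₗ aOp j

/-- The imaginary-hopping Hamiltonian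
`H_ImHop = (i/2) ∑_{j=1}^N (s_j† s_{j+1} − s_{j+1}† s_j)` on the periodic chain. -/
def HImHop (N : ℕ) [NeZero N] : QS N →ₗ[ℂ] QS N :=
  (Complex.I / 2) • ∑ j : Fin N, (aDag j ∘ₗ aOp (j + 1) - aDag (j + 1) ∘ₗ aOp j)

/-- Two-particle Dicke state `|W²⟩ = (1/√C(N,2)) ∑_{j<k} s_j† s_k† |0̄⟩`. -/
def W2 (N : ℕ) : QS N :=
  (Real.sqrt (N.choose 2) : ℂ)⁻¹ •
    ∑ p ∈ Finset.univ.filter (fun p : Fin N × Fin N => p.1 < p.2),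
      ket (fun k => if k = p.1 ∨ k = p.2 then 1 else 0)

/-- The two-particle imaginary-hopping Hamiltonian
`H²_ImHop = (i/2) ∑_j (s_j† s_{j+1}† s_{j+1} s_{j+2} − s_{j+2}† s_{j+1}† s_{j+1} s_j)`
(equivalently `(i/2) ∑_j (|110⟩⟨011| − |011⟩⟨110|)_{j,j+1,j+2}`), periodic indexing. -/
def H2ImHop (N : ℕ) [NeZero N] : QS N →ₗ[ℂ] QS N :=
  (Complex.I / 2) •
    ∑ j : Fin N,
      (aDag j ∘ₗ aDag (j + 1) ∘ₗ aOp (j + 1) ∘ₗ aOp (j + 1 + 1)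
        - aDag (j + 1 + 1) ∘ₗ aDag (j + 1) ∘ₗ aOp (j + 1) ∘ₗ aOp j)

/-! The term `s_j† s_{j+1}† s_{j+1} s_{j+2}` moves a particle from `j + 2` to `j` across the
occupied site `j + 1`. The amplitudes of `|W²⟩` depend only on the particle number, so such a move
does not change them, and the difference of the term and its adjoint acts on `|W²⟩` as
`n_j n_{j+1} - n_{j+1} n_{j+2}`. Summing over `j` telescopes: to zero on the ring, and to the two
boundary terms on a segment. -/

section Telescoping

open Fin.NatCast

variable {M : Type*} [AddCommGroup M] {N : ℕ} [NeZero N]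

theorem Fin.sum_sub_add_one_eq_zero (F : Fin N → M) : ∑ j, (F j - F (j + 1)) = 0 := by
  rw [Finset.sum_sub_distrib, sub_eq_zero]
  exact (Equiv.sum_comp (Equiv.addRight 1) F).symm

theorem Fin.sum_ite_sub_add_one (F : Fin N → M) {ℓ r : Fin N} (hlr : ℓ < r) :
    ∑ j : Fin N, (if ℓ ≤ j ∧ (j : ℕ) + 2 ≤ r then F j - F (j + 1) else 0) = F ℓ - F (r - 1) := by
  set G : ℕ → M := fun m => F m
  have hG : ∀ j : Fin N, F j - F (j + 1) = G j - G (j + 1) := fun j => by simp [G]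
  have hlr_val : (ℓ : ℕ) < r := hlr
  calc ∑ j : Fin N, (if ℓ ≤ j ∧ (j : ℕ) + 2 ≤ r then F j - F (j + 1) else 0)
      = ∑ m ∈ Finset.range N, (if (ℓ : ℕ) ≤ m ∧ m + 2 ≤ r then G m - G (m + 1) else 0) := by
        rw [← Fin.sum_univ_eq_sum_range]
        simp only [hG, Fin.le_def]
    _ = ∑ m ∈ Finset.Ico (ℓ : ℕ) (r - 1), (G m - G (m + 1)) := by
        rw [← Finset.sum_filter]
        congr 1
        ext m
        simp only [Finset.mem_filter, Finset.mem_range, Finset.mem_Ico]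
        omega
    _ = G ℓ - G (r - 1) := by
        rw [← neg_sub, ← Finset.sum_Ico_sub G (show (ℓ : ℕ) ≤ r - 1 by omega),
          ← Finset.sum_neg_distrib]
        simp only [neg_sub]
    _ = F ℓ - F (r - 1) := by
        have hr : ((r - 1 : Fin N) : ℕ) = r - 1 :=
          Fin.val_sub_one_of_ne_zero (_root_.ne_zero_of_lt hlr)
        rw [← hr]
        simp only [G, Fin.cast_val_eq_self]

end Telescoping

theorem Fin.self_ne_add_one {N : ℕ} [NeZero N] (hN : 2 ≤ N) (j : Fin N) : j ≠ j + 1 := by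
  rw [ne_eq, left_eq_add, ← Fin.val_eq_val]
  simp
  omega

theorem Fin.self_ne_add_one_add_one {N : ℕ} [NeZero N] (hN : 3 ≤ N) (j : Fin N) :
    j ≠ j + 1 + 1 := by
  rw [ne_eq, add_assoc, left_eq_add, Fin.ext_iff, Fin.val_add, Fin.val_one']
  simp [Nat.mod_eq_of_lt (show 2 < N by omega)]

section Operators

variable {N : ℕ}

def hop (s : Cfg N) (a b : Fin N) : Cfg N := Function.update (Function.update s a 0) b 1

theorem aDag_apply (j : Fin N) (ψ : QS N) (s : Cfg N) :
    aDag j ψ s = if s j = 1 then ψ (Function.update s j 0) else 0 := rfl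

theorem aOp_apply (j : Fin N) (ψ : QS N) (s : Cfg N) :
    aOp j ψ s = if s j = 0 then ψ (Function.update s j 1) else 0 := rfl

theorem nOp_apply (j : Fin N) (ψ : QS N) (s : Cfg N) :
    nOp j ψ s = if s j = 1 then ψ s else 0 := by
  by_cases h : s j = 1
  · have hs : Function.update s j 1 = s := Function.update_eq_self_iff.2 h.symm
    simp [nOp, aDag_apply, aOp_apply, h, hs]
  · simp [nOp, aDag_apply, h]

theorem nOp_comp_nOp_apply (a b : Fin N) (ψ : QS N) (s : Cfg N) :
    (nOp a ∘ₗ nOp b) ψ s = if s a = 1 ∧ s b = 1 then ψ s else 0 := by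
  simp only [LinearMap.comp_apply, nOp_apply, ite_and]

theorem aDag_aDag_aOp_aOp_apply {j₀ j₁ j₂ : Fin N} (h01 : j₀ ≠ j₁) (h02 : j₀ ≠ j₂) (h12 : j₁ ≠ j₂)
    (ψ : QS N) (s : Cfg N) :
    (aDag j₀ ∘ₗ aDag j₁ ∘ₗ aOp j₁ ∘ₗ aOp j₂) ψ s =
      if s j₀ = 1 ∧ s j₁ = 1 ∧ s j₂ = 0 then ψ (hop s j₀ j₂) else 0 := by
  simp only [hop, LinearMap.comp_apply, aDag_apply, aOp_apply, Function.update_apply, h01.symm,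
    h02.symm, h12.symm, if_true, if_false]
  by_cases h0 : s j₀ = 1 <;> by_cases h1 : s j₁ = 1 <;> by_cases h2 : s j₂ = 0 <;>
    simp only [h0, h1, h2, if_true, if_false, false_and, and_false, and_self, Function.update_idem]
  have hs : Function.update (Function.update s j₀ 0) j₁ 1 = Function.update s j₀ 0 :=
    Function.update_eq_self_iff.2 (by rw [Function.update_of_ne h01.symm, h1])
  rw [hs]

theorem aDag_aDag_aOp_aOp_sub_apply_of_hop_invariant {j₀ j₁ j₂ : Fin N}
    (h01 : j₀ ≠ j₁) (h02 : j₀ ≠ j₂) (h12 : j₁ ≠ j₂) {ψ : QS N}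
    (hψ : ∀ s a b, s a = 1 → s b = 0 → ψ (hop s a b) = ψ s) :
    (aDag j₀ ∘ₗ aDag j₁ ∘ₗ aOp j₁ ∘ₗ aOp j₂ - aDag j₂ ∘ₗ aDag j₁ ∘ₗ aOp j₁ ∘ₗ aOp j₀) ψ
      = (nOp j₀ ∘ₗ nOp j₁) ψ - (nOp j₁ ∘ₗ nOp j₂) ψ := by
  ext s
  simp only [LinearMap.sub_apply, PiLp.sub_apply, aDag_aDag_aOp_aOp_apply h01 h02 h12,
    aDag_aDag_aOp_aOp_apply h12.symm h02.symm h01.symm, nOp_comp_nOp_apply]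
  obtain h1 | h1 : s j₁ = 0 ∨ s j₁ = 1 := by omega
  · simp [h1]
  rcases (by omega : s j₀ = 0 ∨ s j₀ = 1) with h0 | h0 <;>
    rcases (by omega : s j₂ = 0 ∨ s j₂ = 1) with h2 | h2
  · simp [h0, h1, h2]
  · simp [h0, h1, h2, hψ _ _ _ h2 h0]
  · simp [h0, h1, h2, hψ _ _ _ h0 h2]
  · simp [h0, h1, h2]

def occupied (s : Cfg N) : Finset (Fin N) := Finset.univ.filter (s · = 1)

theorem occupied_hop (s : Cfg N) (a b : Fin N) :
    occupied (hop s a b) = insert b ((occupied s).erase a) := by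
  ext k
  by_cases hkb : k = b <;> by_cases hka : k = a <;>
    simp [occupied, hop, Function.update_apply, hka, hkb]

theorem card_occupied_hop {s : Cfg N} {a b : Fin N} (ha : s a = 1) (hb : s b = 0) :
    (occupied (hop s a b)).card = (occupied s).card := by
  rw [occupied_hop, Finset.card_insert_of_notMem (by simp [occupied, hb]),
    Finset.card_erase_add_one (by simp [occupied, ha])]

theorem eq_ite_or_iff_occupied_eq {s : Cfg N} {a b : Fin N} :
    s = (fun k => if k = a ∨ k = b then 1 else 0) ↔ occupied s = {a, b} := by
  constructor
  · rintro rfl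
    ext k
    simp [occupied, or_iff_not_imp_left]
  · intro h
    funext k
    have hk := Finset.ext_iff.1 h k
    simp only [occupied, Finset.mem_filter, Finset.mem_univ, true_and, Finset.mem_insert,
      Finset.mem_singleton] at hk
    split_ifs with hab
    · exact hk.2 hab
    · omega

theorem card_filter_occupied_eq_pair (s : Cfg N) :
    ((Finset.univ.filter fun p : Fin N × Fin N => p.1 < p.2 ∧ occupied s = {p.1, p.2})).card
      = if (occupied s).card = 2 then 1 else 0 := by
  split_ifs with h2
  · obtain ⟨a, b, hab, hs⟩ := Finset.card_eq_two.1 h2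
    wlog hlt : a < b generalizing a b
    · exact this b a hab.symm (by rw [hs, Finset.pair_comm]) (hab.symm.lt_of_le (not_lt.1 hlt))
    refine Finset.card_eq_one.2 ⟨(a, b), Finset.ext fun p => ?_⟩
    simp only [Finset.mem_filter, Finset.mem_univ, true_and, Finset.mem_singleton, hs,
      ← Finset.coe_inj, Finset.coe_pair, Set.pair_eq_pair_iff, Prod.ext_iff]
    grind
  · refine Finset.card_eq_zero.2 (Finset.filter_eq_empty_iff.2 fun p _ ⟨hp, hs⟩ => h2 ?_)
    rw [hs, Finset.card_pair hp.ne]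

theorem W2_apply (s : Cfg N) :
    W2 N s = (Real.sqrt (N.choose 2) : ℂ)⁻¹ * if (occupied s).card = 2 then 1 else 0 := by
  simp only [W2, ket, PiLp.smul_apply, WithLp.ofLp_sum, Finset.sum_apply, PiLp.single_apply,
    eq_ite_or_iff_occupied_eq, smul_eq_mul]
  rw [Finset.sum_boole, Finset.filter_filter, card_filter_occupied_eq_pair]
  simp

theorem W2_hop {s : Cfg N} {a b : Fin N} (ha : s a = 1) (hb : s b = 0) :
    W2 N (hop s a b) = W2 N s := by
  simp only [W2_apply, card_occupied_hop ha hb]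

end Operators

/-- `H²_ImHop |W²⟩ = 0`, and for a contiguous segment `Λ = {ℓ,…,r}` (no
wrap-around) the truncation `(i/2) ∑_{j=ℓ}^{r−2} (…)` acts on `|W²⟩` as the boundary operator
`(i/2)(n_ℓ n_{ℓ+1} − n_{r−1} n_r)`. -/
theorem H2ImHop_W2_and_truncated_boundary_action (N : ℕ) [NeZero N] (hN : 3 ≤ N)
    (ℓ r : Fin N) (hlr : ℓ < r) :
    H2ImHop N (W2 N) = 0
      ∧ ((Complex.I / 2) •
            ∑ j : Fin N,
              if ℓ ≤ j ∧ (j : ℕ) + 2 ≤ (r : ℕ) then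
                aDag j ∘ₗ aDag (j + 1) ∘ₗ aOp (j + 1) ∘ₗ aOp (j + 1 + 1)
                  - aDag (j + 1 + 1) ∘ₗ aDag (j + 1) ∘ₗ aOp (j + 1) ∘ₗ aOp j
              else 0)
          (W2 N)
        = ((Complex.I / 2) • (nOp ℓ ∘ₗ nOp (ℓ + 1) - nOp (r - 1) ∘ₗ nOp r)) (W2 N) := by
  set F : Fin N → QS N := fun j => (nOp j ∘ₗ nOp (j + 1)) (W2 N)
  have hterm : ∀ j : Fin N,
      (aDag j ∘ₗ aDag (j + 1) ∘ₗ aOp (j + 1) ∘ₗ aOp (j + 1 + 1)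
        - aDag (j + 1 + 1) ∘ₗ aDag (j + 1) ∘ₗ aOp (j + 1) ∘ₗ aOp j) (W2 N) = F j - F (j + 1) :=
    fun j => aDag_aDag_aOp_aOp_sub_apply_of_hop_invariant (Fin.self_ne_add_one (by omega) j)
      (Fin.self_ne_add_one_add_one hN j) (Fin.self_ne_add_one (by omega) (j + 1))
      fun _ _ _ => W2_hop
  constructor
  · rw [H2ImHop, LinearMap.smul_apply, LinearMap.sum_apply,
      Finset.sum_congr rfl fun j _ => hterm j, Fin.sum_sub_add_one_eq_zero, smul_zero]
  · simp only [LinearMap.smul_apply, LinearMap.sum_apply, LinearMap.sub_apply,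
      apply_ite (fun T : QS N →ₗ[ℂ] QS N => T (W2 N)), hterm, LinearMap.zero_apply]
    rw [Fin.sum_ite_sub_add_one F hlr]
    simp only [F, sub_add_cancel]

end
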